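/- arXiv:2205.09999 — 2 statements merged into one kernel-verified Lean document; each statement's English description precedes it below -/
import Mathlib

section
/- Let C be a dg category whose pretriangulated hull is \bar{C}, and let J be a dg ideal of \bar{C}. Then J equals the ideal of morphisms whose components lie in the restriction of J to C; that is, J = \overline{J|_C}. -/
/-!
We model the hull abstractly: `ι : C ⥤ \bar C` is a full dg subcategory, and each object
`K` of `\bar C` comes with a finite decomposition into objects of `C`, recorded by
injections `inj` and projections `proj` with `∑ proj ≫ inj = 𝟙 K` (the graded,
not necessarily closed, structure morphisms of a one-sided twisted complex).
The components of `f : K ⟶ L` are the morphisms `inj K i ≫ f ≫ proj L j`.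
-/

open CategoryTheory

universe v u v' u'

structure DGStruct (C : Type u) [Category.{v} C] [Preadditive C] where
  d : ∀ {X Y : C}, (X ⟶ Y) →+ (X ⟶ Y)
  d_sq : ∀ {X Y : C} (f : X ⟶ Y), d (d f) = 0
  leibniz : ∀ {X Y Z : C} (f : X ⟶ Y) (g : Y ⟶ Z), d (f ≫ g) = d f ≫ g + f ≫ d g

structure DGIdeal {C : Type u} [Category.{v} C] [Preadditive C] (D : DGStruct C) where
  carrier : ∀ X Y : C, AddSubgroup (X ⟶ Y)
  comp_left : ∀ {X Y Z : C} (f : X ⟶ Y) (g : Y ⟶ Z), f ∈ carrier X Y → f ≫ g ∈ carrier X Z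
  comp_right : ∀ {X Y Z : C} (f : X ⟶ Y) (g : Y ⟶ Z), g ∈ carrier Y Z → f ≫ g ∈ carrier X Z
  d_mem : ∀ {X Y : C} (f : X ⟶ Y), f ∈ carrier X Y → D.d f ∈ carrier X Y

structure SumDecomp {C : Type u} [Category.{v} C] {Cbar : Type u'} [Category.{v'} Cbar]
    [Preadditive Cbar] (ι : C ⥤ Cbar) where
  n : Cbar → ℕ
  obj : ∀ K : Cbar, Fin (n K) → C
  inj : ∀ (K : Cbar) (i : Fin (n K)), ι.obj (obj K i) ⟶ K
  proj : ∀ (K : Cbar) (i : Fin (n K)), K ⟶ ι.obj (obj K i)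
  total : ∀ K : Cbar, (∑ i, proj K i ≫ inj K i) = 𝟙 K

namespace DGIdeal

variable {C : Type u} [Category.{v} C] [Preadditive C] {D : DGStruct C} (J : DGIdeal D)

theorem comp_comp_mem {W X Y Z : C} (a : W ⟶ X) {f : X ⟶ Y} (b : Y ⟶ Z)
    (hf : f ∈ J.carrier X Y) : a ≫ f ≫ b ∈ J.carrier W Z :=
  J.comp_right a _ (J.comp_left f b hf)

end DGIdeal

namespace SumDecomp

variable {C : Type u} [Category.{v} C] {Cbar : Type u'} [Category.{v'} Cbar] [Preadditive Cbar]
  {ι : C ⥤ Cbar} (dec : SumDecomp ι)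

theorem eq_sum_components {K L : Cbar} (f : K ⟶ L) :
    f = ∑ i, ∑ j, dec.proj K i ≫ (dec.inj K i ≫ f ≫ dec.proj L j) ≫ dec.inj L j :=
  calc f = (∑ i, dec.proj K i ≫ dec.inj K i) ≫ f ≫ ∑ j, dec.proj L j ≫ dec.inj L j := by
        rw [dec.total, dec.total, Category.id_comp, Category.comp_id]
    _ = _ := by
        simp only [Preadditive.sum_comp, Preadditive.comp_sum, Category.assoc]
        exact Finset.sum_comm

end SumDecomp

theorem stmt9_general {C : Type u} [Category.{v} C] {Cbar : Type u'} [Category.{v'} Cbar]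
    [Preadditive Cbar] (ι : C ⥤ Cbar)
    (dec : SumDecomp ι) (D : DGStruct Cbar) (J : DGIdeal D) :
    ∀ {K L : Cbar} (f : K ⟶ L), f ∈ J.carrier K L ↔
      ∀ (i : Fin (dec.n K)) (j : Fin (dec.n L)),
        dec.inj K i ≫ f ≫ dec.proj L j ∈
          J.carrier (ι.obj (dec.obj K i)) (ι.obj (dec.obj L j)) := by
  intro K L f
  refine ⟨fun hf i j => J.comp_comp_mem _ _ hf, fun h => ?_⟩
  rw [dec.eq_sum_components f]
  exact AddSubgroup.sum_mem _ fun i _ => AddSubgroup.sum_mem _ fun j _ =>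
    J.comp_comp_mem _ _ (h i j)

/-- A dg ideal of the hull is determined componentwise: `J = \overline{J|_C}`. -/
theorem stmt9 {C : Type u} [Category.{v} C] {Cbar : Type u'} [Category.{v'} Cbar]
    [Preadditive Cbar] (ι : C ⥤ Cbar) [ι.Full] [ι.Faithful]
    (dec : SumDecomp ι) (D : DGStruct Cbar) (J : DGIdeal D) :
    ∀ {K L : Cbar} (f : K ⟶ L), f ∈ J.carrier K L ↔
      ∀ (i : Fin (dec.n K)) (j : Fin (dec.n L)),
        dec.inj K i ≫ f ≫ dec.proj L j ∈
          J.carrier (ι.obj (dec.obj K i)) (ι.obj (dec.obj L j)) :=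
  stmt9_general ι dec D J
end

section
/- Let M be a monoidal category with coequalizers preserved by tensoring, let A and B be algebra objects in M. Suppose X is an A-B-bimodule and Y is a B-A-bimodule such that X ⊗_B Y ≅ A as A-A-bimodules and Y ⊗_A X ≅ B as B-B-bimodules. Then the functors (−) ⊗_A X and (−) ⊗_B Y define mutually inverse equivalences between the category of right A-modules and the category of right B-modules in M. -/
/-!
Monoids in `M` and bimodules between them form a bicategory in which 1-cells `R ⟶ A` are
`R`-`A`-bimodules and composition is the relative tensor product. The isomorphisms `hXY`, `hYX`
make `X` an equivalence `A ≌ B` in this bicategory, and postcomposing with an equivalence is an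
equivalence of hom-categories. Right `A`-modules are the 1-cells out of the trivial monoid.
-/

open CategoryTheory MonoidalCategory CategoryTheory.Limits

universe w₀ v₀ u₀

namespace CategoryTheory.Bicategory.Equivalence

variable {B : Type u₀} [Bicategory.{w₀, v₀} B] {b c : B}

noncomputable def postcomposing (e : Bicategory.Equivalence b c) (a : B) : (a ⟶ b) ≌ (a ⟶ c) :=
  CategoryTheory.Equivalence.mk ((Bicategory.postcomposing a b c).obj e.hom)
    ((Bicategory.postcomposing a c b).obj e.inv)
    ((rightUnitorNatIso a b).symm ≪≫ (Bicategory.postcomposing a b b).mapIso e.unit ≪≫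
      (associatorNatIsoLeft a e.hom e.inv).symm)
    (associatorNatIsoLeft a e.inv e.hom ≪≫ (Bicategory.postcomposing a c c).mapIso e.counit ≪≫
      rightUnitorNatIso a c)

end CategoryTheory.Bicategory.Equivalence

universe v u

theorem stmt11 {M : Type u} [Category.{v} M] [MonoidalCategory M]
    [HasCoequalizers M]
    [∀ X : M, PreservesColimitsOfSize.{0, 0} (tensorLeft X)]
    [∀ X : M, PreservesColimitsOfSize.{0, 0} (tensorRight X)]
    (A B : Mon M) (X : Bimod A B) (Y : Bimod B A)
    (hXY : X.tensorBimod Y ≅ Bimod.regular A)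
    (hYX : Y.tensorBimod X ≅ Bimod.regular B) :
    ∃ E : Bimod (Mon.trivial M) A ≌ Bimod (Mon.trivial M) B,
      (∀ P : Bimod (Mon.trivial M) A, Nonempty (E.functor.obj P ≅ P.tensorBimod X)) ∧
      (∀ Q : Bimod (Mon.trivial M) B, Nonempty (E.inverse.obj Q ≅ Q.tensorBimod Y)) := by
  let _ := Bimod.monBicategory (C := M)
  let e : Bicategory.Equivalence A B :=
    Bicategory.Equivalence.mkOfAdjointifyCounit (f := X) (g := Y) hXY.symm hYX
  exact ⟨e.postcomposing (Mon.trivial M), fun _ => ⟨Iso.refl _⟩, fun _ => ⟨Iso.refl _⟩⟩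
end
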